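/- Let Δ : ℕ^(2) → ℕ be an infinite colouring (i.e., the image of Δ is infinite) and let n ≥ 2 be a natural number. Then |G_Δ ∩ [n(n-1)/2]| ≥ n − 1. -/

import Mathlib

/-!
Fix `j` and let `X` be a finite set that is minimal under inclusion among those carrying more
than `C(j+1, 2)` colours, say `m` of them. Since `m ≤ C(|X|, 2)`, we have `|X| ≥ j + 2`. Every
colour of `X` appears on an edge, which survives the deletion of any of the other `|X| - 2`
vertices, while by minimality each `X \ {v}` carries at most `C(j+1, 2)` colours. Double counting
gives `(|X| - 2) m ≤ |X| C(j+1, 2)`, hence `m ≤ C(j+2, 2)`. So each interval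
`(C(j+1, 2), C(j+2, 2)]` meets `G_Δ`, and the `n - 1` intervals with `j + 2 ≤ n` are disjoint
subsets of `[C(n, 2)]`.
-/

/-- The colour of the unordered edge `{x, y}` (only values on distinct pairs matter). -/
def edgeCol (Δ : ℕ → ℕ → ℕ) (x y : ℕ) : ℕ := Δ (min x y) (max x y)

/-- `colourSet Δ X` is the set of colours attained by `Δ` on edges with both endpoints in `X`. -/
def colourSet (Δ : ℕ → ℕ → ℕ) (X : Set ℕ) : Set ℕ :=
  {c | ∃ x ∈ X, ∃ y ∈ X, x ≠ y ∧ edgeCol Δ x y = c}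

/-- `G_Δ`: the set of `m ≥ 1` for which some (finite or infinite) `X ⊆ ℕ` is
exactly `m`-coloured. -/
def GSet (Δ : ℕ → ℕ → ℕ) : Set ℕ :=
  {m | 1 ≤ m ∧ ∃ X : Set ℕ, (colourSet Δ X).Finite ∧ (colourSet Δ X).ncard = m}

open Finset

lemma edgeCol_comm (Δ : ℕ → ℕ → ℕ) (x y : ℕ) : edgeCol Δ x y = edgeCol Δ y x := by
  simp only [edgeCol, min_comm, max_comm]

def colours (Δ : ℕ → ℕ → ℕ) (X : Finset ℕ) : Finset ℕ :=
  X.offDiag.image fun p => edgeCol Δ p.1 p.2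

section colours

variable (Δ : ℕ → ℕ → ℕ)

lemma mem_colours {X : Finset ℕ} {c : ℕ} :
    c ∈ colours Δ X ↔ ∃ x ∈ X, ∃ y ∈ X, x ≠ y ∧ edgeCol Δ x y = c := by
  simp [colours, and_assoc]

lemma coe_colours (X : Finset ℕ) : (colours Δ X : Set ℕ) = colourSet Δ X := by
  ext c
  simp [mem_colours, colourSet]

lemma colours_mono {X Y : Finset ℕ} (h : X ⊆ Y) : colours Δ X ⊆ colours Δ Y :=
  image_subset_image (offDiag_mono h)

lemma card_colours_le_choose_two (X : Finset ℕ) : #(colours Δ X) ≤ (#X).choose 2 := by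
  have : colours Δ X =
      (X.offDiag.image Sym2.mk.uncurry).image (Sym2.lift ⟨edgeCol Δ, edgeCol_comm Δ⟩) := by
    rw [image_image]; rfl
  rw [this, ← Sym2.card_image_offDiag]
  exact card_image_le

lemma card_colours_mem_GSet {X : Finset ℕ} (h : 0 < #(colours Δ X)) :
    #(colours Δ X) ∈ GSet Δ :=
  ⟨h, X, coe_colours Δ X ▸ (colours Δ X).finite_toSet, by
    rw [← coe_colours, Set.ncard_coe_finset]⟩

lemma exists_subset_colours {S : Finset ℕ} (hS : ↑S ⊆ colourSet Δ Set.univ) :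
    ∃ X : Finset ℕ, S ⊆ colours Δ X := by
  induction S using Finset.induction_on with
  | empty => exact ⟨∅, empty_subset _⟩
  | insert c S _ ih =>
    obtain ⟨X, hX⟩ := ih ((coe_subset.2 (subset_insert c S)).trans hS)
    obtain ⟨x, -, y, -, hxy, rfl⟩ := hS (mem_insert_self c S)
    refine ⟨insert x (insert y X), insert_subset ?_ (hX.trans (colours_mono Δ ?_))⟩
    · exact (mem_colours Δ).2 ⟨x, by simp, y, by simp, hxy, rfl⟩
    · exact (subset_insert y X).trans (subset_insert x _)

lemma exists_le_card_colours (hΔ : (colourSet Δ Set.univ).Infinite) (k : ℕ) :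
    ∃ X : Finset ℕ, k ≤ #(colours Δ X) := by
  obtain ⟨S, hS, rfl⟩ := hΔ.exists_subset_card_eq k
  obtain ⟨X, hX⟩ := exists_subset_colours Δ hS
  exact ⟨X, card_le_card hX⟩

lemma card_colours_mul_le_of_forall_card_colours_erase_le {X : Finset ℕ} {A : ℕ}
    (hA : ∀ v ∈ X, #(colours Δ (X.erase v)) ≤ A) : #(colours Δ X) * (#X - 2) ≤ #X * A := by
  refine card_mul_le_card_mul (fun c v => c ∈ colours Δ (X.erase v)) (fun c hc => ?_)
    fun v hv => (card_le_card fun c hc => (mem_filter.1 hc).2).trans (hA v hv)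
  obtain ⟨x, hx, y, hy, hxy, rfl⟩ := (mem_colours Δ).1 hc
  calc #X - 2 ≤ #((X.erase x).erase y) := by
        rw [card_erase_of_mem (mem_erase.2 ⟨hxy.symm, hy⟩), card_erase_of_mem hx]; omega
    _ ≤ _ := card_le_card fun v hv => by
        simp only [mem_erase] at hv
        refine mem_filter.2 ⟨hv.2.2, (mem_colours Δ).2 ⟨x, ?_, y, ?_, hxy, rfl⟩⟩
        · exact mem_erase.2 ⟨fun h => hv.2.1 h.symm, hx⟩
        · exact mem_erase.2 ⟨fun h => hv.1 h.symm, hy⟩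

end colours

lemma le_choose_two_of_mul_le {j t m : ℕ} (hjt : j ≤ t) (ht : 0 < t)
    (h : m * t ≤ (t + 2) * (j + 1).choose 2) : m ≤ (j + 2).choose 2 := by
  have hA : 2 * (j + 1).choose 2 = (j + 1) * j := by
    rw [Nat.choose_two_right, add_tsub_cancel_right]
    exact Nat.mul_div_cancel' (Nat.even_mul_pred_self (j + 1)).two_dvd
  rw [Nat.choose_succ_succ', Nat.choose_one_right]
  refine le_of_mul_le_mul_right (h.trans ?_) ht
  nlinarith

lemma exists_mem_GSet_choose_two_lt_le (Δ : ℕ → ℕ → ℕ) (hΔ : (colourSet Δ Set.univ).Infinite)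
    (j : ℕ) : ∃ m ∈ GSet Δ, (j + 1).choose 2 < m ∧ m ≤ (j + 2).choose 2 := by
  set A := (j + 1).choose 2
  obtain ⟨X₀, hX₀⟩ := exists_le_card_colours Δ hΔ (A + 1)
  obtain ⟨X, hX⟩ := exists_minimal_of_wellFoundedLT (fun X => A < #(colours Δ X)) ⟨X₀, hX₀⟩
  have hmany : A < #(colours Δ X) := hX.prop
  have herase : ∀ v ∈ X, #(colours Δ (X.erase v)) ≤ A := fun v hv =>
    not_lt.1 (hX.not_prop_of_lt (erase_ssubset hv))
  refine ⟨_, card_colours_mem_GSet Δ ((Nat.zero_le A).trans_lt hmany), hmany, ?_⟩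
  have hchoose := card_colours_le_choose_two Δ X
  have hsize : j + 2 ≤ #X := by
    by_contra! hsmall
    have := Nat.choose_le_choose 2 (Nat.le_of_lt_succ hsmall)
    omega
  obtain ⟨t, ht⟩ : ∃ t, #X = t + 2 := ⟨#X - 2, by omega⟩
  rcases t.eq_zero_or_pos with rfl | htpos
  · obtain rfl : j = 0 := by omega
    rwa [ht] at hchoose
  · have hcount := card_colours_mul_le_of_forall_card_colours_erase_le Δ herase
    rw [ht, add_tsub_cancel_right] at hcount
    exact le_choose_two_of_mul_le (by omega) htpos hcount

theorem GSet_inter_lower_bound_general (Δ : ℕ → ℕ → ℕ)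
    (hΔ : (colourSet Δ Set.univ).Infinite) (n : ℕ) :
    n - 1 ≤ (GSet Δ ∩ Set.Icc 1 (n * (n - 1) / 2)).ncard := by
  choose f hfG hlow hup using exists_mem_GSet_choose_two_lt_le Δ hΔ
  have hmono : StrictMono f := strictMono_nat_of_lt_succ fun j => (hup j).trans_lt (hlow (j + 1))
  have hsub : f '' Set.Iio (n - 1) ⊆ GSet Δ ∩ Set.Icc 1 (n * (n - 1) / 2) := by
    rintro _ ⟨j, hj, rfl⟩
    rw [← Nat.choose_two_right]
    exact ⟨hfG j, (hfG j).1, (hup j).trans (Nat.choose_le_choose 2 (by grind))⟩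
  calc n - 1 = (f '' Set.Iio (n - 1)).ncard := by
        rw [Set.ncard_image_of_injective _ hmono.injective, ← coe_range, Set.ncard_coe_finset,
          card_range]
    _ ≤ _ := Set.ncard_le_ncard hsub ((Set.finite_Icc _ _).subset Set.inter_subset_right)

/-- **Theorem 3.** For every infinite colouring `Δ : ℕ^(2) → ℕ` and every `n ≥ 2`,
`|G_Δ ∩ [n(n-1)/2]| ≥ n - 1`. -/
theorem GSet_inter_lower_bound (Δ : ℕ → ℕ → ℕ)
    (hΔ : (colourSet Δ Set.univ).Infinite) (n : ℕ) (hn : 2 ≤ n) :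
    n - 1 ≤ (GSet Δ ∩ Set.Icc 1 (n * (n - 1) / 2)).ncard :=
  GSet_inter_lower_bound_general Δ hΔ n
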